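/- arXiv:math/9911002 — 3 statements merged into one kernel-verified Lean document; each statement's English description precedes it below -/
import Mathlib

section
/- Let B be a finite-dimensional C*-algebra and let H be a Hilbert C*-module over B. Let X be a finite or countably infinite subset of H. Then there exists a finite or countably infinite subset V of H such that (i) the B-submodule of H generated by V equals the B-submodule of H generated by X, (ii) whenever v, w ∈ V and v ≠ w one has ⟨v, w⟩ = 0, and (iii) for every v ∈ V the inner product ⟨v, v⟩ is a minimal projection in B. -/
open scoped InnerProductSpace RightActions

set_option linter.unusedSectionVars false
set_option linter.unusedVariables false
set_option maxHeartbeats 1000000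

/-- A minimal projection in a C⋆-algebra `B`: a nonzero self-adjoint idempotent `e`
such that `e * B * e = ℂ • e`. -/
def IsMinimalProjection {B : Type*} [NonUnitalRing B] [Module ℂ B] [StarRing B] (e : B) : Prop :=
  e ≠ 0 ∧ IsSelfAdjoint e ∧ IsIdempotentElem e ∧ ∀ b : B, ∃ c : ℂ, e * b * e = c • e

/-- The December 2024 Mathlib `CStarModule` (right module: `SMul Aᵐᵒᵖ E`, inner product
`A`-linear on the right), restated since Mathlib's `CStarModule` is now a left-module notion. -/
class CStarModuleRight (A E : Type*) [NonUnitalSemiring A] [StarRing A]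
    [Module ℂ A] [AddCommGroup E] [Module ℂ E] [PartialOrder A] [SMul Aᵐᵒᵖ E] [Norm A] [Norm E]
    extends Inner A E where
  inner_add_right {x} {y} {z} : inner x (y + z) = inner x y + inner x z
  inner_self_nonneg {x} : 0 ≤ inner x x
  inner_self {x} : inner x x = 0 ↔ x = 0
  inner_op_smul_right {a : A} {x y : E} : inner x (y <• a) = inner x y * a
  inner_smul_right_complex {z : ℂ} {x} {y} : inner x (z • y) = z • inner x y
  star_inner x y : star (inner x y) = inner y x
  norm_eq_sqrt_norm_inner_self x : ‖x‖ = √‖inner x x‖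

lemma continuousOn_of_fin {f : ℝ → ℝ} {s : Set ℝ} (hs : s.Finite) : ContinuousOn f s := by
  have : Finite s := hs
  rw [continuousOn_iff_continuous_restrict]
  exact continuous_of_discreteTopology

section Spec
variable {B : Type*} [CStarAlgebra B] [FiniteDimensional ℂ B]

lemma finite_spectrum_complex (a : B) : (spectrum ℂ a).Finite := by
  cases subsingleton_or_nontrivial B with
  | inl h =>
    have : spectrum ℂ a = ∅ := by
      ext x; simp [spectrum.mem_iff, isUnit_of_subsingleton]
    simp [this]
  | inr h =>
    have hint : IsIntegral ℂ a := Algebra.IsIntegral.isIntegral a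
    have hne : minpoly ℂ a ≠ 0 := minpoly.ne_zero hint
    have hsub := spectrum.subset_polynomial_aeval a (minpoly ℂ a)
    rw [minpoly.aeval, spectrum.zero_eq] at hsub
    refine (Polynomial.finite_setOf_isRoot hne).subset fun x hx => ?_
    have := hsub ⟨x, hx, rfl⟩
    simpa [Polynomial.IsRoot] using this

lemma finite_spectrum_real (a : B) : (spectrum ℝ a).Finite := by
  rw [← spectrum.preimage_algebraMap ℂ]
  exact Set.Finite.preimage (fun x _ y _ h => by exact_mod_cast h) (finite_spectrum_complex a)

lemma contOn (a : B) (f : ℝ → ℝ) : ContinuousOn f (spectrum ℝ a) :=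
  continuousOn_of_fin (finite_spectrum_real a)

/-- the indicator function of a single real point -/
noncomputable def indf (μ : ℝ) : ℝ → ℝ := fun t => if t = μ then 1 else 0

lemma spectral_proj_props (h : B) (hsa : IsSelfAdjoint h) (μ : ℝ) (hμ : μ ≠ 0) :
    cfc (indf μ) h * cfc (indf μ) h = cfc (indf μ) h ∧
    IsSelfAdjoint (cfc (indf μ) h) ∧
    h * cfc (fun t => if t = μ then μ⁻¹ else 0) h = cfc (indf μ) h ∧
    cfc (fun t => if t = μ then μ⁻¹ else 0) h * h = cfc (indf μ) h := by
  refine ⟨?_, cfc_predicate _ h, ?_, ?_⟩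
  · rw [← cfc_mul _ _ h (contOn h _) (contOn h _)]
    exact cfc_congr fun t _ => by by_cases ht : t = μ <;> simp [indf, ht]
  · nth_rw 1 [← cfc_id ℝ h hsa]
    rw [← cfc_mul _ _ h (contOn h _) (contOn h _)]
    exact cfc_congr fun t _ => by
      by_cases ht : t = μ <;> simp [indf, ht]
      field_simp
  · nth_rw 2 [← cfc_id ℝ h hsa]
    rw [← cfc_mul _ _ h (contOn h _) (contOn h _)]
    exact cfc_congr fun t _ => by
      by_cases ht : t = μ <;> simp [indf, ht]
      field_simp

lemma spectral_proj_ne_zero (h : B) (hsa : IsSelfAdjoint h) (μ : ℝ)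
    (hμs : μ ∈ spectrum ℝ h) : cfc (indf μ) h ≠ 0 := by
  intro hq
  have h0 : cfc (indf μ) h = cfc (fun _ : ℝ => (0:ℝ)) h := by
    rw [hq, cfc_const_zero]
  have := eqOn_of_cfc_eq_cfc (a := h) h0 (contOn h _) (contOn h _) hsa hμs
  simp [indf] at this

end Spec

section Corner
variable {B : Type*} [CStarAlgebra B] [FiniteDimensional ℂ B]

noncomputable def corner (p : B) : Submodule ℂ B :=
  LinearMap.range ((LinearMap.mulRight ℂ p).comp (LinearMap.mulLeft ℂ p))

omit [FiniteDimensional ℂ B] in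
lemma mem_corner {p b : B} : b ∈ corner p ↔ ∃ c, p * c * p = b := by
  simp [corner, LinearMap.mem_range]

omit [FiniteDimensional ℂ B] in
lemma self_mem_corner {p : B} (hp : p * p = p) : p ∈ corner p :=
  mem_corner.mpr ⟨p, by rw [hp, hp]⟩

omit [FiniteDimensional ℂ B] in
lemma corner_mono {p q : B} (h1 : q * p = q) (h2 : p * q = q) : corner q ≤ corner p := by
  rintro b hb
  obtain ⟨c, rfl⟩ := mem_corner.mp hb
  exact mem_corner.mpr ⟨q * c * q,
    by rw [show p * (q * c * q) * p = (p * q) * c * (q * p) from by noncomm_ring, h1, h2]⟩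

omit [FiniteDimensional ℂ B] in
lemma not_mem_corner {p q : B} (hq : q * q = q) (h1 : q * p = q) (hne : q ≠ p) :
    p ∉ corner q := by
  intro hm
  obtain ⟨c, hc⟩ := mem_corner.mp hm
  apply hne
  calc q = q * p := h1.symm
  _ = q * (q * c * q) := by rw [hc]
  _ = (q * q) * c * q := by noncomm_ring
  _ = q * c * q := by rw [hq]
  _ = p := hc

lemma corner_rank_lt {p q : B} (hp : p * p = p) (hq : q * q = q)
    (h1 : q * p = q) (h2 : p * q = q) (hne : q ≠ p) :
    Module.finrank ℂ (corner q) < Module.finrank ℂ (corner p) :=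
  Submodule.finrank_lt_finrank_of_lt
    (lt_of_le_of_ne (corner_mono h1 h2)
      (fun hEq => not_mem_corner hq h1 hne (hEq ▸ self_mem_corner hp)))

end Corner


section Decomp
variable {B : Type*} [CStarAlgebra B] [FiniteDimensional ℂ B]

theorem proj_decomp (n : ℕ) : ∀ (p : B), Module.finrank ℂ (corner p) ≤ n →
    IsSelfAdjoint p → p * p = p →
    ∃ s : Finset B, (∑ e ∈ s, e) = p ∧
      (∀ e ∈ s, IsMinimalProjection e ∧ e * p = e ∧ p * e = e) ∧
      (∀ e ∈ s, ∀ f ∈ s, e ≠ f → e * f = 0) := by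
  induction n using Nat.strong_induction_on with
  | _ n IH =>
  intro p hrank hsa hidem
  classical
  by_cases hp0 : p = 0
  · exact ⟨∅, by simp [hp0], by simp, by simp⟩
  by_cases hmin : ∀ b : B, ∃ c : ℂ, p * b * p = c • p
  · refine ⟨{p}, by simp, ?_, ?_⟩
    · intro e he
      rw [Finset.mem_singleton] at he; subst he
      exact ⟨⟨hp0, hsa, hidem, hmin⟩, hidem, hidem⟩
    · intro e he f hf hne
      rw [Finset.mem_singleton] at he hf; subst he; subst hf
      exact absurd rfl hne
  push_neg at hmin
  obtain ⟨b, hb⟩ := hmin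
  have hfix : ∀ c : B, p * (p * c * p) * p = p * c * p := fun c => by
    rw [show p * (p * c * p) * p = (p * p) * c * (p * p) from by noncomm_ring, hidem]
  -- extract a selfadjoint element of the corner that is not a scalar multiple of p
  have hsel : ∃ h : B, IsSelfAdjoint h ∧ p * h * p = h ∧ ∀ c : ℂ, h ≠ c • p := by
    set b' := p * b * p with hb'def
    have hstarb' : star b' = p * star b * p := by
      rw [hb'def, star_mul, star_mul, hsa.star_eq, mul_assoc]
    set re := ((1:ℂ)/2) • (b' + star b') with hre_def
    set im := (-(Complex.I)/2) • (b' - star b') with him_def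
    have hre_sa : IsSelfAdjoint re := by
      rw [hre_def]
      simp only [IsSelfAdjoint, star_smul, star_add, star_star, RCLike.star_def, map_div₀,
        map_one, map_ofNat]
      rw [add_comm]
    have him_sa : IsSelfAdjoint im := by
      have h1 : star (-(Complex.I)/2 : ℂ) = -(-(Complex.I)/2) := by
        norm_num [Complex.ext_iff]
      rw [him_def, IsSelfAdjoint, star_smul, h1, star_sub, star_star, neg_smul, ← smul_neg,
        neg_sub]
    have hre_corner : p * re * p = re := by
      rw [hre_def, hstarb', hb'def]
      rw [mul_smul_comm, smul_mul_assoc]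
      congr 1
      rw [mul_add, add_mul, hfix, hfix]
    have him_corner : p * im * p = im := by
      rw [him_def, hstarb', hb'def]
      rw [mul_smul_comm, smul_mul_assoc]
      congr 1
      rw [mul_sub, sub_mul, hfix, hfix]
    have hdecomp : b' = re + Complex.I • im := by
      rw [hre_def, him_def, smul_smul,
        show Complex.I * (-(Complex.I)/2) = 1/2 from by
          linear_combination (-1/2 : ℂ) * Complex.I_mul_I]
      module
    by_cases hre : ∀ c : ℂ, re ≠ c • p
    · exact ⟨re, hre_sa, hre_corner, hre⟩
    by_cases him : ∀ c : ℂ, im ≠ c • p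
    · exact ⟨im, him_sa, him_corner, him⟩
    push_neg at hre him
    obtain ⟨c₁, hc₁⟩ := hre
    obtain ⟨c₂, hc₂⟩ := him
    exact absurd (by rw [hdecomp, hc₁, hc₂, smul_smul, ← add_smul])
      (hb (c₁ + Complex.I * c₂))
  obtain ⟨h, hhsa, hhc, hne⟩ := hsel
  have hph : p * h = h := by
    conv_lhs => rw [← hhc]
    rw [show p * (p * h * p) = (p * p) * h * p from by noncomm_ring, hidem, hhc]
  have hhp : h * p = h := by
    conv_lhs => rw [← hhc]
    rw [show (p * h * p) * p = p * h * (p * p) from by noncomm_ring, hidem, hhc]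
  by_cases hcase : ∃ μ ∈ spectrum ℝ h, μ ≠ 0 ∧ cfc (indf μ) h ≠ p
  · obtain ⟨μ, hμσ, hμ0, hqnep⟩ := hcase
    obtain ⟨hqq, hqsa, hq1, hq2⟩ := spectral_proj_props h hhsa μ hμ0
    set q := cfc (indf μ) h with hq_def
    set w := cfc (fun t => if t = μ then μ⁻¹ else 0) h with hw_def
    have hq0 : q ≠ 0 := spectral_proj_ne_zero h hhsa μ hμσ
    have hpq : p * q = q := by rw [← hq1, ← mul_assoc, hph]
    have hqp : q * p = q := by rw [← hq2, mul_assoc, hhp]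
    set p' := p - q with hp'_def
    have hp'sa : IsSelfAdjoint p' := hsa.sub hqsa
    have hp'idem : p' * p' = p' := by
      rw [hp'_def, sub_mul, mul_sub, mul_sub, hidem, hpq, hqp, hqq]
      abel
    have hp'p : p' * p = p' := by rw [hp'_def, sub_mul, hidem, hqp]
    have hpp' : p * p' = p' := by rw [hp'_def, mul_sub, hidem, hpq]
    have hp'ne : p' ≠ p := by
      rw [hp'_def]
      simpa [sub_eq_self] using hq0
    have hqp'0 : q * p' = 0 := by rw [hp'_def, mul_sub, hqp, hqq, sub_self]
    have hp'q0 : p' * q = 0 := by rw [hp'_def, sub_mul, hpq, hqq, sub_self]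
    have hrk1 : Module.finrank ℂ (corner q) < n :=
      lt_of_lt_of_le (corner_rank_lt hidem hqq hqp hpq hqnep) hrank
    have hrk2 : Module.finrank ℂ (corner p') < n :=
      lt_of_lt_of_le (corner_rank_lt hidem hp'idem hp'p hpp' hp'ne) hrank
    obtain ⟨s₁, hs₁sum, hs₁mem, hs₁orth⟩ :=
      IH (Module.finrank ℂ (corner q)) hrk1 q le_rfl hqsa hqq
    obtain ⟨s₂, hs₂sum, hs₂mem, hs₂orth⟩ :=
      IH (Module.finrank ℂ (corner p')) hrk2 p' le_rfl hp'sa hp'idem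
    have hcross : ∀ e ∈ s₁, ∀ f ∈ s₂, e * f = 0 ∧ f * e = 0 := by
      intro e he f hf
      obtain ⟨_, heq, hqe⟩ := hs₁mem e he
      obtain ⟨_, hfp', hp'f⟩ := hs₂mem f hf
      constructor
      · rw [← heq, ← hp'f, show e * q * (p' * f) = e * (q * p') * f from by noncomm_ring,
          hqp'0, mul_zero, zero_mul]
      · rw [← hfp', ← hqe, show f * p' * (q * e) = f * (p' * q) * e from by noncomm_ring,
          hp'q0, mul_zero, zero_mul]
    have hdisj : Disjoint s₁ s₂ := by
      rw [Finset.disjoint_left]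
      intro e he₁ he₂
      obtain ⟨⟨he0, _, heidem, _⟩, _, _⟩ := hs₁mem e he₁
      have := (hcross e he₁ e he₂).1
      rw [heidem] at this
      exact he0 this
    refine ⟨s₁ ∪ s₂, ?_, ?_, ?_⟩
    · rw [Finset.sum_union hdisj, hs₁sum, hs₂sum, hp'_def]
      abel
    · intro e he
      rcases Finset.mem_union.mp he with he | he
      · obtain ⟨hm, heq, hqe⟩ := hs₁mem e he
        refine ⟨hm, ?_, ?_⟩
        · rw [← heq, mul_assoc, hqp]
        · rw [← hqe, ← mul_assoc, hpq]
      · obtain ⟨hm, hep', hp'e⟩ := hs₂mem e he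
        refine ⟨hm, ?_, ?_⟩
        · rw [← hep', mul_assoc, hp'p]
        · rw [← hp'e, ← mul_assoc, hpp']
    · intro e he f hf hnef
      rcases Finset.mem_union.mp he with he | he <;>
        rcases Finset.mem_union.mp hf with hf | hf
      · exact hs₁orth e he f hf hnef
      · exact (hcross e he f hf).1
      · exact (hcross f hf e he).2
      · exact hs₂orth e he f hf hnef
  · exfalso
    push_neg at hcase
    by_cases hex : ∃ μ ∈ spectrum ℝ h, μ ≠ 0
    · obtain ⟨μ, hμσ, hμ0⟩ := hex
      have huniq : ∀ t ∈ spectrum ℝ h, t ≠ 0 → t = μ := by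
        intro t htσ ht0
        by_contra htμ
        have h1 : cfc (indf t) h = p := hcase t htσ ht0
        have h2 : cfc (indf μ) h = p := hcase μ hμσ hμ0
        have : cfc (fun s => indf t s * indf μ s) h = cfc (fun _ : ℝ => (0:ℝ)) h := by
          apply cfc_congr
          intro s _
          by_cases hst : s = t
          · subst hst
            by_cases hsμ : s = μ
            · exact absurd hsμ htμ
            · simp [indf, hsμ]
          · simp [indf, hst]
        rw [cfc_mul _ _ h (contOn h _) (contOn h _), h1, h2, hidem, cfc_const_zero] at this
        exact hp0 this
      have : h = (μ : ℂ) • p := by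
        have h1 : h = cfc (fun t => μ • indf μ t) h := by
          conv_lhs => rw [← cfc_id ℝ h hhsa]
          apply cfc_congr
          intro t htσ
          by_cases ht : t = μ
          · simp [indf, ht]
          · have ht0 : t = 0 := by
              by_contra ht0
              exact ht (huniq t htσ ht0)
            subst ht0
            simp [indf, Ne.symm hμ0]
        rw [cfc_smul μ (indf μ) h (contOn h _), hcase μ hμσ hμ0] at h1
        rw [h1, show ((μ:ℝ):ℂ) = (μ:ℝ) • (1:ℂ) from by simp, smul_assoc, one_smul]
      exact hne _ this
    · push_neg at hex
      apply hne 0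
      rw [zero_smul]
      conv_lhs => rw [← cfc_id ℝ h hhsa]
      rw [show (0 : B) = cfc (fun _ : ℝ => (0:ℝ)) h from (cfc_const_zero ℝ h).symm]
      apply cfc_congr
      intro t htσ
      simpa using hex t htσ

end Decomp

namespace CStarModuleRight
variable {B H : Type*}
  [CStarAlgebra B] [PartialOrder B] [StarOrderedRing B]
  [NormedAddCommGroup H] [NormedSpace ℂ H] [Module Bᵐᵒᵖ H] [CStarModuleRight B H]

def innerHom (x : H) : H →+ B :=
  AddMonoidHom.mk' (fun y => ⟪x, y⟫_B) (fun _ _ => inner_add_right)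

lemma inner_sub_right {x y z : H} : ⟪x, y - z⟫_B = ⟪x, y⟫_B - ⟪x, z⟫_B :=
  map_sub (innerHom x) y z

lemma inner_sum_right {ι : Type*} {s : Finset ι} {x : H} {y : ι → H} :
    ⟪x, ∑ i ∈ s, y i⟫_B = ∑ i ∈ s, ⟪x, y i⟫_B :=
  map_sum (innerHom x) y s

lemma inner_sub_left {x y z : H} : ⟪x - y, z⟫_B = ⟪x, z⟫_B - ⟪y, z⟫_B := by
  rw [← star_inner z (x - y), inner_sub_right, star_sub, star_inner, star_inner]

lemma inner_op_smul_left {a : B} {x y : H} : ⟪x <• a, y⟫_B = star a * ⟪x, y⟫_B := by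
  rw [← star_inner y (x <• a), inner_op_smul_right, star_mul, star_inner]

lemma isSelfAdjoint_inner_self {x : H} : IsSelfAdjoint ⟪x, x⟫_B := star_inner x x

end CStarModuleRight

section ModPart
variable {B H : Type*}
  [CStarAlgebra B] [PartialOrder B] [StarOrderedRing B] [FiniteDimensional ℂ B]
  [NormedAddCommGroup H] [NormedSpace ℂ H] [Module Bᵐᵒᵖ H] [CStarModuleRight B H]

lemma opSmul_opSmul (x : H) (a b : B) : (x <• a) <• b = x <• (a * b) := by
  show MulOpposite.op b • MulOpposite.op a • x = MulOpposite.op (a * b) • x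
  rw [MulOpposite.op_mul, mul_smul]

lemma op_smul_self_eq (x : H) (e : B) (hsa : IsSelfAdjoint e)
    (hae : ⟪x, x⟫_B * e = ⟪x, x⟫_B) (hea : e * ⟪x, x⟫_B = ⟪x, x⟫_B) :
    x <• e = x := by
  have key : ⟪x <• e - x, x <• e - x⟫_B = 0 := by
    simp only [CStarModuleRight.inner_sub_left, CStarModuleRight.inner_sub_right,
      CStarModuleRight.inner_op_smul_left, CStarModuleRight.inner_op_smul_right, hsa.star_eq]
    rw [hea]
    simp
  have := CStarModuleRight.inner_self.mp key
  rwa [sub_eq_zero] at this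

lemma op_smul_sum (x : H) {ι : Type*} (s : Finset ι) (g : ι → B) :
    x <• (∑ i ∈ s, g i) = ∑ i ∈ s, x <• (g i) := by
  show MulOpposite.op (∑ i ∈ s, g i) • x = _
  rw [show MulOpposite.op (∑ i ∈ s, g i) = ∑ i ∈ s, MulOpposite.op (g i) from
    map_sum (MulOpposite.opAddEquiv : B ≃+ Bᵐᵒᵖ) g s, Finset.sum_smul]

end ModPart

section Norm2
variable {B H : Type*}
  [CStarAlgebra B] [PartialOrder B] [StarOrderedRing B] [FiniteDimensional ℂ B]
  [NormedAddCommGroup H] [NormedSpace ℂ H] [Module Bᵐᵒᵖ H] [CStarModuleRight B H]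

lemma normalize_vec (y : H) :
    ∃ (z : H) (r s : B), z = y <• r ∧ y = z <• s ∧
      ⟪z, z⟫_B * ⟪z, z⟫_B = ⟪z, z⟫_B ∧ IsSelfAdjoint ⟪z, z⟫_B := by
  set a := ⟪y, y⟫_B with ha_def
  have hasa : IsSelfAdjoint a := CStarModuleRight.isSelfAdjoint_inner_self
  have hspec : ∀ t ∈ spectrum ℝ a, 0 ≤ t :=
    spectrum_nonneg_of_nonneg CStarModuleRight.inner_self_nonneg
  set f : ℝ → ℝ := fun t => (Real.sqrt t)⁻¹ with hf
  set s' : ℝ → ℝ := fun t => Real.sqrt t with hs'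
  set p' : ℝ → ℝ := fun t => if t = 0 then 0 else 1 with hp'
  set r := cfc f a with hr
  set sB := cfc s' a with hsB
  have hrsa : IsSelfAdjoint r := cfc_predicate f a
  have hinner : ⟪y <• r, y <• r⟫_B = cfc p' a := by
    rw [CStarModuleRight.inner_op_smul_left, CStarModuleRight.inner_op_smul_right, hrsa.star_eq,
      ← ha_def]
    have h1 : cfc (fun t => f t * (t * f t)) a = r * (a * r) := by
      rw [cfc_mul _ _ a (contOn a _) (contOn a _),
        cfc_mul _ _ a (contOn a _) (contOn a _), cfc_id' ℝ a hasa]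
    rw [← h1]
    apply cfc_congr
    intro t htσ
    rcases eq_or_lt_of_le (hspec t htσ) with h0 | hpos
    · simp [hp', hf, ← h0]
    · have hsq : Real.sqrt t ≠ 0 := ne_of_gt (Real.sqrt_pos.mpr hpos)
      have hts : Real.sqrt t * Real.sqrt t = t := Real.mul_self_sqrt hpos.le
      simp only [hf, hp']
      rw [if_neg (ne_of_gt hpos)]
      field_simp
      rw [Real.sq_sqrt hpos.le]
  have hPidem : cfc p' a * cfc p' a = cfc p' a := by
    rw [← cfc_mul _ _ a (contOn a _) (contOn a _)]
    apply cfc_congr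
    intro t _
    by_cases ht : t = 0 <;> simp [hp', ht]
  have haP : a * cfc p' a = a := by
    have h2 : cfc (fun t => t * p' t) a = cfc (fun t : ℝ => t) a * cfc p' a :=
      cfc_mul _ _ a (contOn a _) (contOn a _)
    rw [cfc_id' ℝ a hasa] at h2
    rw [← h2]
    conv_rhs => rw [← cfc_id' ℝ a hasa]
    exact cfc_congr fun t _ => by by_cases ht : t = 0 <;> simp [hp', ht]
  have hPa : cfc p' a * a = a := by
    have h2 : cfc (fun t => p' t * t) a = cfc p' a * cfc (fun t : ℝ => t) a :=
      cfc_mul _ _ a (contOn a _) (contOn a _)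
    rw [cfc_id' ℝ a hasa] at h2
    rw [← h2]
    conv_rhs => rw [← cfc_id' ℝ a hasa]
    exact cfc_congr fun t _ => by by_cases ht : t = 0 <;> simp [hp', ht]
  have hrs : r * sB = cfc p' a := by
    rw [hr, hsB, ← cfc_mul _ _ a (contOn a _) (contOn a _)]
    apply cfc_congr
    intro t htσ
    rcases eq_or_lt_of_le (hspec t htσ) with h0 | hpos
    · simp [hp', hf, hs', ← h0]
    · have hsq : Real.sqrt t ≠ 0 := ne_of_gt (Real.sqrt_pos.mpr hpos)
      simp only [hf, hs', hp']
      rw [if_neg (ne_of_gt hpos), inv_mul_cancel₀ hsq]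
  have hyP : y <• cfc p' a = y :=
    op_smul_self_eq y (cfc p' a) (cfc_predicate _ a) (by rw [← ha_def, haP]) (by rw [← ha_def, hPa])
  refine ⟨y <• r, r, sB, rfl, ?_, ?_, ?_⟩
  · rw [opSmul_opSmul, hrs, hyP]
  · rw [hinner]; exact hPidem
  · rw [hinner]; exact cfc_predicate _ a

end Norm2

section Step
variable {B H : Type*}
  [CStarAlgebra B] [PartialOrder B] [StarOrderedRing B] [FiniteDimensional ℂ B]
  [NormedAddCommGroup H] [NormedSpace ℂ H] [Module Bᵐᵒᵖ H] [CStarModuleRight B H]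

lemma gs_step (T : Finset H) (x : H) :
    ∃ T' : Finset H, T ⊆ T' ∧
      (((∀ v ∈ T, ∀ w ∈ T, v ≠ w → ⟪v, w⟫_B = 0) ∧
        (∀ v ∈ T, IsMinimalProjection (⟪v, v⟫_B))) →
        (Submodule.span Bᵐᵒᵖ (T' : Set H) = Submodule.span Bᵐᵒᵖ (insert x (T : Set H)) ∧
         (∀ v ∈ T', ∀ w ∈ T', v ≠ w → ⟪v, w⟫_B = 0) ∧
         (∀ v ∈ T', IsMinimalProjection (⟪v, v⟫_B)))) := by
  classical
  by_cases hh : (∀ v ∈ T, ∀ w ∈ T, v ≠ w → ⟪v, w⟫_B = 0) ∧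
      (∀ v ∈ T, IsMinimalProjection (⟪v, v⟫_B))
  swap
  · exact ⟨T, subset_rfl, fun h => absurd h hh⟩
  obtain ⟨hT, hmin⟩ := hh
  set y := x - ∑ v ∈ T, v <• ⟪v, x⟫_B with hy
  have hvv : ∀ v ∈ T, v <• ⟪v, v⟫_B = v := by
    intro v hv
    obtain ⟨hne0, hsa, hidem, _⟩ := hmin v hv
    exact op_smul_self_eq v _ hsa hidem hidem
  have horth_y : ∀ v ∈ T, ⟪v, y⟫_B = 0 := by
    intro v hv
    have hkey : ⟪v, v⟫_B * ⟪v, x⟫_B = ⟪v, x⟫_B := by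
      conv_rhs => rw [← hvv v hv]
      rw [CStarModuleRight.inner_op_smul_left, CStarModuleRight.star_inner]
    rw [hy, CStarModuleRight.inner_sub_right, CStarModuleRight.inner_sum_right,
      Finset.sum_eq_single v
        (fun w hw hwv => by
          rw [CStarModuleRight.inner_op_smul_right, hT v hv w hw (Ne.symm hwv), zero_mul])
        (fun hv' => absurd hv hv'),
      CStarModuleRight.inner_op_smul_right, hkey, sub_self]
  obtain ⟨z, r, s, hz_def, hy_eq, hPidem, hPsa⟩ := normalize_vec (B := B) y
  have horth_z : ∀ v ∈ T, ⟪v, z⟫_B = 0 := fun v hv => by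
    rw [hz_def, CStarModuleRight.inner_op_smul_right, horth_y v hv, zero_mul]
  obtain ⟨s₀, hsum, hmem, horthE⟩ := proj_decomp (Module.finrank ℂ (corner (⟪z, z⟫_B)))
      (⟪z, z⟫_B) le_rfl CStarModuleRight.isSelfAdjoint_inner_self hPidem
  set T' := T ∪ s₀.image (fun e => z <• e) with hT'
  have hzP : z <• ⟪z, z⟫_B = z :=
    op_smul_self_eq z _ CStarModuleRight.isSelfAdjoint_inner_self hPidem hPidem
  have hz_sum : z = ∑ e ∈ s₀, z <• e := by
    conv_lhs => rw [← hzP, ← hsum]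
    exact op_smul_sum z s₀ (fun e => e)
  have hinner_ef : ∀ e ∈ s₀, ∀ f ∈ s₀, ⟪z <• e, z <• f⟫_B = e * (⟪z, z⟫_B * f) := by
    intro e he f hf
    rw [CStarModuleRight.inner_op_smul_left, CStarModuleRight.inner_op_smul_right,
      ((hmem e he).1.2.1).star_eq]

  have hinner_ee : ∀ e ∈ s₀, ⟪z <• e, z <• e⟫_B = e := by
    intro e he
    rw [hinner_ef e he e he, (hmem e he).2.2, (hmem e he).1.2.2.1]
  have hinner_ef0 : ∀ e ∈ s₀, ∀ f ∈ s₀, e ≠ f → ⟪z <• e, z <• f⟫_B = 0 := by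
    intro e he f hf hef
    rw [hinner_ef e he f hf, ← mul_assoc, (hmem e he).2.1, horthE e he f hf hef]
  have hTorth_img : ∀ v ∈ T, ∀ e ∈ s₀, ⟪v, z <• e⟫_B = 0 := by
    intro v hv e he
    rw [CStarModuleRight.inner_op_smul_right, horth_z v hv, zero_mul]
  -- the span equality
  have hTsub : ∀ v ∈ T, v ∈ Submodule.span Bᵐᵒᵖ (insert x (T : Set H)) :=
    fun v hv => Submodule.subset_span (Set.mem_insert_of_mem _ hv)
  have hy_mem : y ∈ Submodule.span Bᵐᵒᵖ (insert x (T : Set H)) := by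
    rw [hy]
    refine sub_mem (Submodule.subset_span (Set.mem_insert _ _)) (Submodule.sum_mem _ ?_)
    intro v hv
    exact Submodule.smul_mem _ _ (hTsub v hv)
  have hspan : Submodule.span Bᵐᵒᵖ (T' : Set H) =
      Submodule.span Bᵐᵒᵖ (insert x (T : Set H)) := by
    apply le_antisymm
    · rw [Submodule.span_le]
      intro u hu
      rw [hT'] at hu
      simp only [Finset.coe_union, Set.mem_union, Finset.coe_image, Set.mem_image,
        Finset.mem_coe] at hu
      rcases hu with hu | ⟨e, he, rfl⟩
      · exact hTsub u hu
      · rw [hz_def, opSmul_opSmul]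
        exact Submodule.smul_mem _ _ hy_mem
    · rw [Submodule.span_le]
      intro u hu
      have himg_mem : ∀ e ∈ s₀, z <• e ∈ Submodule.span Bᵐᵒᵖ (T' : Set H) := by
        intro e he
        apply Submodule.subset_span
        rw [hT']
        simp only [Finset.coe_union, Set.mem_union, Finset.coe_image]
        exact Or.inr ⟨e, he, rfl⟩
      have hz_mem : z ∈ Submodule.span Bᵐᵒᵖ (T' : Set H) := by
        rw [hz_sum]
        exact Submodule.sum_mem _ fun e he => himg_mem e he
      have hy_mem' : y ∈ Submodule.span Bᵐᵒᵖ (T' : Set H) := by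
        rw [hy_eq]
        exact Submodule.smul_mem _ _ hz_mem
      have hT_mem : ∀ v ∈ T, v ∈ Submodule.span Bᵐᵒᵖ (T' : Set H) := by
        intro v hv
        apply Submodule.subset_span
        rw [hT']
        simp only [Finset.coe_union, Set.mem_union, Finset.mem_coe]
        exact Or.inl hv
      rcases Set.mem_insert_iff.mp hu with rfl | hu
      · have hx_eq : u = y + ∑ v ∈ T, v <• ⟪v, u⟫_B := by rw [hy]; abel
        rw [hx_eq]
        exact add_mem hy_mem' (Submodule.sum_mem _ fun v hv =>
          Submodule.smul_mem _ _ (hT_mem v hv))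
      · exact hT_mem u hu
  refine ⟨T', Finset.subset_union_left, fun _ => ⟨hspan, ?_, ?_⟩⟩
  · intro v hv w hw hvw
    rw [hT'] at hv hw
    rcases Finset.mem_union.mp hv with hv | hv <;>
      rcases Finset.mem_union.mp hw with hw | hw
    · exact hT v hv w hw hvw
    · obtain ⟨e, he, rfl⟩ := Finset.mem_image.mp hw
      exact hTorth_img v hv e he
    · obtain ⟨e, he, rfl⟩ := Finset.mem_image.mp hv
      rw [← CStarModuleRight.star_inner, hTorth_img w hw e he, star_zero]
    · obtain ⟨e, he, rfl⟩ := Finset.mem_image.mp hv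
      obtain ⟨f, hf, rfl⟩ := Finset.mem_image.mp hw
      refine hinner_ef0 e he f hf fun hef => hvw ?_
      rw [hef]
  · intro v hv
    rw [hT'] at hv
    rcases Finset.mem_union.mp hv with hv | hv
    · exact hmin v hv
    · obtain ⟨e, he, rfl⟩ := Finset.mem_image.mp hv
      rw [hinner_ee e he]
      exact (hmem e he).1

end Step

/-- Gram–Schmidt procedure in a Hilbert C⋆-module over a finite-dimensional C⋆-algebra. -/
theorem gram_schmidt_cstar_module {B H : Type*}
    [CStarAlgebra B] [PartialOrder B] [StarOrderedRing B] [FiniteDimensional ℂ B]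
    [NormedAddCommGroup H] [NormedSpace ℂ H] [Module Bᵐᵒᵖ H] [CStarModuleRight B H]
    [CompleteSpace H]
    (X : Set H) (hX : X.Countable) :
    ∃ V : Set H, V.Countable ∧
      Submodule.span Bᵐᵒᵖ V = Submodule.span Bᵐᵒᵖ X ∧
      (∀ v ∈ V, ∀ w ∈ V, v ≠ w → ⟪v, w⟫_B = 0) ∧
      (∀ v ∈ V, IsMinimalProjection (⟪v, v⟫_B)) := by
  classical
  rcases Set.eq_empty_or_nonempty X with rfl | hXne
  · exact ⟨∅, Set.countable_empty, rfl, by simp, by simp⟩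
  obtain ⟨f, rfl⟩ := hX.exists_eq_range hXne
  choose next hnext1 hnext2 using gs_step (B := B) (H := H)
  set G : ℕ → Finset H := fun n => Nat.rec ∅ (fun n T => next T (f n)) n with hG
  have hG0 : G 0 = ∅ := rfl
  have hGs : ∀ n, G (n + 1) = next (G n) (f n) := fun n => rfl
  have hinv : ∀ n, (∀ v ∈ G n, ∀ w ∈ G n, v ≠ w → ⟪v, w⟫_B = 0) ∧
      (∀ v ∈ G n, IsMinimalProjection (⟪v, v⟫_B)) ∧
      Submodule.span Bᵐᵒᵖ (G n : Set H) = Submodule.span Bᵐᵒᵖ (f '' Set.Iio n) := by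
    intro n
    induction n with
    | zero =>
      refine ⟨by simp [hG0], by simp [hG0], ?_⟩
      rw [hG0]
      have h2 : f '' Set.Iio 0 = (∅ : Set H) := by
        have : Set.Iio 0 = (∅ : Set ℕ) := by ext m; simp
        rw [this, Set.image_empty]
      rw [h2]
      simp
    | succ n ih =>
      obtain ⟨h1, h2, h3⟩ := ih
      obtain ⟨hspan, horth, hmin⟩ := hnext2 (G n) (f n) ⟨h1, h2⟩
      rw [← hGs n] at hspan horth hmin
      refine ⟨horth, hmin, ?_⟩
      have hIio : Set.Iio (n + 1) = insert n (Set.Iio n) := by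
        ext m; simp only [Set.mem_Iio, Set.mem_insert_iff]; omega
      rw [hspan, Submodule.span_insert, h3, hIio, Set.image_insert_eq,
        Submodule.span_insert]
  have hmono : ∀ m n, m ≤ n → G m ⊆ G n := by
    intro m n h
    induction h with
    | refl => exact subset_rfl
    | step h' ih => exact ih.trans (by rw [hGs]; exact hnext1 _ _)
  refine ⟨⋃ n, (G n : Set H), Set.countable_iUnion fun n => (G n).countable_toSet, ?_, ?_, ?_⟩
  · apply le_antisymm
    · rw [Submodule.span_le]
      intro v hv
      obtain ⟨n, hn⟩ := Set.mem_iUnion.mp hv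
      have : v ∈ Submodule.span Bᵐᵒᵖ ((G n : Set H)) := Submodule.subset_span hn
      rw [(hinv n).2.2] at this
      exact Submodule.span_mono (Set.image_subset_range f _) this
    · rw [Submodule.span_le]
      rintro v ⟨n, rfl⟩
      have h1 : f n ∈ Submodule.span Bᵐᵒᵖ (f '' Set.Iio (n + 1)) :=
        Submodule.subset_span ⟨n, by simp, rfl⟩
      rw [← (hinv (n + 1)).2.2] at h1
      exact Submodule.span_mono (Set.subset_iUnion (fun k => ((G k : Set H))) (n + 1)) h1
  · intro v hv w hw hvw
    obtain ⟨m, hm⟩ := Set.mem_iUnion.mp hv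
    obtain ⟨n, hn⟩ := Set.mem_iUnion.mp hw
    exact (hinv (max m n)).1 v (hmono m _ (le_max_left m n) hm)
      w (hmono n _ (le_max_right m n) hn) hvw
  · intro v hv
    obtain ⟨n, hn⟩ := Set.mem_iUnion.mp hv
    exact (hinv n).2.1 v hn
end

section
/- Let A be a unital C*-algebra and let L ∈ A be an isometry, i.e. L*L = 1. With P := 1 − L²(L*)² and W := P(L + L*)P, the element W is a self-adjoint partial isometry with W* = W and W² = P. -/
/-!
Write `E = 1 - L L*` for the projection onto the complement of the range of `L`; it satisfies
`E L = 0` and `L* E = 0`. Then `P = E + L E L*`, and pushing `P` through `L + L*` gives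
`W = L E + E L*`. Squaring, the cross terms `L E L E` and `E L* E L*` vanish, leaving
`W² = L E L* + E = P`. Finally `W W* W = W P = W` because `P` is a projection.
-/

section Isometry

variable {R : Type*} [Ring R] [StarRing R] {L : R}

lemma isStarProjection_one_sub_mul_star (hL : star L * L = 1) :
    IsStarProjection (1 - L * star L) := by
  refine IsStarProjection.one_sub ⟨?_, IsSelfAdjoint.mul_star_self L⟩
  rw [IsIdempotentElem, mul_assoc, ← mul_assoc (star L), hL, one_mul]

lemma star_sq_mul_sq_eq_one (hL : star L * L = 1) : star (L ^ 2) * L ^ 2 = 1 := by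
  rw [star_pow, sq, sq, mul_assoc, ← mul_assoc (star L) L, hL, one_mul, hL]

lemma one_sub_mul_star_mul_self (hL : star L * L = 1) : (1 - L * star L) * L = 0 := by
  rw [sub_mul, mul_assoc, hL, one_mul, mul_one, sub_self]

lemma star_mul_one_sub_mul_star (hL : star L * L = 1) : star L * (1 - L * star L) = 0 := by
  rw [mul_sub, ← mul_assoc, hL, one_mul, mul_one, sub_self]

omit [StarRing R] in
lemma one_sub_sq_mul_sq (L L' : R) :
    1 - L ^ 2 * L' ^ 2 = (1 - L * L') + L * (1 - L * L') * L' := by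
  noncomm_ring

variable {E : R} (hL : star L * L = 1) (hE : IsIdempotentElem E) (hEL : E * L = 0)
  (hLE : star L * E = 0)
include hL hE hEL hLE

lemma conj_add_star_eq :
    (E + L * E * star L) * (L + star L) * (E + L * E * star L) = L * E + E * star L := by
  set P := E + L * E * star L
  have hPL : P * L = L * E := by
    rw [add_mul, hEL, mul_assoc, hL, mul_one, zero_add]
  have hLP : star L * P = E * star L := by
    rw [mul_add, hLE, ← mul_assoc, ← mul_assoc, hL, one_mul, zero_add]
  have hEP : E * P = E := by
    rw [mul_add, hE.eq, ← mul_assoc, ← mul_assoc, hEL, zero_mul, zero_mul, add_zero]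
  have hPE : P * E = E := by
    rw [add_mul, hE.eq, mul_assoc, hLE, mul_zero, add_zero]
  calc P * (L + star L) * P = P * L * P + P * (star L * P) := by noncomm_ring
    _ = L * E + E * star L := by rw [hPL, hLP, mul_assoc, hEP, ← mul_assoc, hPE]

lemma mul_self_add_star_mul :
    (L * E + E * star L) * (L * E + E * star L) = E + L * E * star L := by
  calc (L * E + E * star L) * (L * E + E * star L)
      = L * (E * L) * E + L * (E * E) * star L + E * (star L * L) * E
        + E * (star L * E) * star L := by noncomm_ring
    _ = E + L * E * star L := by
      rw [hEL, hE.eq, hL, hLE, mul_one, hE.eq]; noncomm_ring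

end Isometry

/-- If `L` is an isometry in a unital C⋆-algebra, `P = 1 - L² (L*)²` and `W = P (L + L*) P`,
then `W` is a self-adjoint partial isometry with `W* = W` and `W² = P`. -/
theorem W_selfadjoint_partial_isometry {A : Type*} [CStarAlgebra A]
    (L : A) (hL : star L * L = 1)
    (P W : A) (hP : P = 1 - L ^ 2 * (star L) ^ 2) (hW : W = P * (L + star L) * P) :
    star W = W ∧ W * W = P ∧ W * star W * W = W := by
  have hPproj : IsStarProjection P := by
    rw [hP, ← star_pow]; exact isStarProjection_one_sub_mul_star (star_sq_mul_sq_eq_one hL)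
  have hsW : star W = W := by
    rw [hW]; exact (IsSelfAdjoint.add_star_self L).conjugate_self hPproj.isSelfAdjoint
  have hE := (isStarProjection_one_sub_mul_star hL).isIdempotentElem
  have hEL := one_sub_mul_star_mul_self hL
  have hLE := star_mul_one_sub_mul_star hL
  have hP' : P = _ := hP.trans (one_sub_sq_mul_sq L (star L))
  have hWW : W * W = P := by
    rw [hW, hP', conj_add_star_eq hL hE hEL hLE, mul_self_add_star_mul hL hE hEL hLE]
  refine ⟨hsW, hWW, ?_⟩
  rw [hsW, mul_assoc, hWW, hW, mul_assoc, hPproj.isIdempotentElem.eq]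
end

section
/- Let A be a unital C*-algebra, let L ∈ A be an isometry (L*L = 1), and let d, e ∈ A be self-adjoint elements satisfying L*dL = e, L*eL = d, and L*e²L = d². Then Ld = eL. -/
/-!
Expanding `(L d - e L)⋆ (L d - e L)` with `L⋆ L = 1`, `L⋆ e L = d` and `L⋆ e² L = d²` gives
`d² - d² - d² + d² = 0`, and the C⋆-identity turns `x⋆ x = 0` into `x = 0`.
-/

theorem star_mul_self_mul_sub_mul_of_isometry {R : Type*} [Ring R] [StarRing R] {L d e : R}
    (hL : star L * L = 1) (hd : IsSelfAdjoint d) (he : IsSelfAdjoint e) :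
    star (L * d - e * L) * (L * d - e * L) =
      d ^ 2 - d * (star L * e * L) - star L * e * L * d + star L * e ^ 2 * L := by
  have hLdL : d * (star L * L) * d = d ^ 2 := by rw [hL]; noncomm_ring
  rw [← hLdL]
  simp only [star_sub, star_mul, hd.star_eq, he.star_eq]
  noncomm_ring

theorem isometry_intertwines_general {A : Type*} [CStarAlgebra A]
    (L : A) (hL : star L * L = 1)
    (d e : A) (hd : IsSelfAdjoint d) (he : IsSelfAdjoint e)
    (h2 : star L * e * L = d)
    (h3 : star L * e ^ 2 * L = d ^ 2) :
    L * d = e * L := by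
  have hzero : star (L * d - e * L) * (L * d - e * L) = 0 := by
    rw [star_mul_self_mul_sub_mul_of_isometry hL hd he, h2, h3]
    noncomm_ring
  exact sub_eq_zero.mp ((CStarRing.star_mul_self_eq_zero_iff _).mp hzero)

/-- If `L` is an isometry in a unital C⋆-algebra and `d`, `e` are self-adjoint elements with
`L* d L = e`, `L* e L = d` and `L* e² L = d²`, then `L d = e L`. -/
theorem isometry_intertwines {A : Type*} [CStarAlgebra A]
    (L : A) (hL : star L * L = 1)
    (d e : A) (hd : IsSelfAdjoint d) (he : IsSelfAdjoint e)
    (h1 : star L * d * L = e) (h2 : star L * e * L = d)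
    (h3 : star L * e ^ 2 * L = d ^ 2) :
    L * d = e * L :=
  isometry_intertwines_general L hL d e hd he h2 h3
end
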